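/- For any hypergraph H=(V,E) and partition A whose parts all have positive volume, if p(H*) (the component partition of the sub-hypergraph of edges internal to A) is a strict refinement of A, then q_H(p(H*)) > q_H(A). -/

import Mathlib

open Classical Finset

variable {V : Type*} [Fintype V] [DecidableEq V]

/-- The degree of a vertex in the hypergraph with edge set `E`:
the number of hyperedges containing it. -/
def hdeg (E : Finset (Finset V)) (v : V) : ℕ := (E.filter (fun e => v ∈ e)).card

/-- The volume of a set of vertices: the sum of their degrees. -/
noncomputable def hvol (E : Finset (Finset V)) (A : Finset V) : ℝ :=
  ∑ v ∈ A, (hdeg E v : ℝ)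

/-- Strict hypergraph modularity of a partition `P`:
`q_H(P) = (1/|E|) ( ∑_{A ∈ P} |{e ∈ E : e ⊆ A}| - ∑_{d ≥ 2} |E_d| ∑_{A ∈ P} (vol A / vol V)^d )`,
where the degree tax is written edgewise as `∑_{e ∈ E} ∑_{A ∈ P} (vol A / vol V)^{|e|}`. -/
noncomputable def hQ (E : Finset (Finset V)) (P : Finpartition (Finset.univ : Finset V)) : ℝ :=
  (1 / (E.card : ℝ)) *
    ((∑ A ∈ P.parts, ((E.filter (fun e => e ⊆ A)).card : ℝ)) -
      ∑ e ∈ E, ∑ A ∈ P.parts, (hvol E A / hvol E Finset.univ) ^ e.card)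

/-- The edges of `E` internal to some part of the partition `P`. -/
def internalEdges (E : Finset (Finset V)) (P : Finpartition (Finset.univ : Finset V)) :
    Finset (Finset V) :=
  E.filter (fun e => ∃ A ∈ P.parts, e ⊆ A)

/-- The partition of `V` into connected components of the hypergraph `(V, E')`
(two vertices are connected when joined by a path of hyperedges). -/
noncomputable def compPartition (E' : Finset (Finset V)) :
    Finpartition (Finset.univ : Finset V) :=
  Finpartition.ofSetoid (Relation.EqvGen.setoid (fun u v => ∃ e ∈ E', u ∈ e ∧ v ∈ e))

/-!
Both partitions see the same internal edges, since every internal edge of `A` lies inside one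
component of `H*`; so the coverage terms agree. In the degree tax each part `B` of `A` is
replaced by the parts `p ⊆ B` of `p(H*)`, and `∑ (vol p)^d ≤ (∑ vol p)^d = (vol B)^d` by
superadditivity of `x ↦ x^d`, strictly for `d ≥ 2` as soon as `B` splits into two parts of
positive volume.
-/

theorem sum_pow_le_pow_sum {R ι : Type*} [Semiring R] [PartialOrder R] [IsOrderedRing R]
    {t : Finset ι} {f : ι → R} (hf : ∀ i ∈ t, 0 ≤ f i) {d : ℕ} (hd : d ≠ 0) :
    ∑ i ∈ t, f i ^ d ≤ (∑ i ∈ t, f i) ^ d := by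
  induction t using Finset.cons_induction with
  | empty => simp [hd]
  | cons a t _ ih =>
    rw [sum_cons, sum_cons]
    have hfa := hf a (mem_cons_self a t)
    have hft : ∀ i ∈ t, 0 ≤ f i := fun i hi => hf i (mem_cons_of_mem hi)
    calc f a ^ d + ∑ i ∈ t, f i ^ d ≤ f a ^ d + (∑ i ∈ t, f i) ^ d := by
          gcongr; exact ih hft
      _ ≤ (f a + ∑ i ∈ t, f i) ^ d := pow_add_pow_le hfa (sum_nonneg hft) hd

theorem sum_pow_lt_pow_sum {R ι : Type*} [CommSemiring R] [LinearOrder R]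
    [IsStrictOrderedRing R] {t : Finset ι} {f : ι → R} (hf : ∀ i ∈ t, 0 < f i)
    (ht : 1 < #t) {d : ℕ} (hd : 2 ≤ d) :
    ∑ i ∈ t, f i ^ d < (∑ i ∈ t, f i) ^ d := by
  obtain ⟨k, rfl⟩ := Nat.exists_eq_add_of_le hd
  set S := ∑ i ∈ t, f i
  have hlt : ∀ i ∈ t, f i < S := by
    intro i hi
    obtain ⟨j, hj, hji⟩ := exists_mem_ne ht i
    have hrest : 0 < ∑ x ∈ t.erase i, f x :=
      sum_pos (fun x hx => hf x (mem_of_mem_erase hx)) ⟨j, mem_erase.2 ⟨hji, hj⟩⟩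
    exact (lt_add_of_pos_right _ hrest).trans_eq (add_sum_erase t f hi)
  calc ∑ i ∈ t, f i ^ (2 + k) = ∑ i ∈ t, f i * f i ^ (1 + k) := by
        exact sum_congr rfl fun i _ => by ring
    _ < ∑ i ∈ t, f i * S ^ (1 + k) := by
        refine sum_lt_sum_of_nonempty (card_pos.1 (by omega)) fun i hi => ?_
        have hpow : f i ^ (1 + k) < S ^ (1 + k) :=
          pow_lt_pow_left₀ (hlt i hi) (hf i hi).le (by omega)
        exact mul_lt_mul_of_pos_left hpow (hf i hi)
    _ = S ^ (2 + k) := by rw [← sum_mul]; ring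

namespace Finpartition

variable {α : Type*} [DecidableEq α] {s B : Finset α} {P Q : Finpartition s}

def partsIn (P : Finpartition s) (B : Finset α) : Finset (Finset α) := P.parts.filter (· ⊆ B)

theorem mem_partsIn {p : Finset α} : p ∈ P.partsIn B ↔ p ∈ P.parts ∧ p ⊆ B := mem_filter

theorem part_mem_partsIn (hPQ : P ≤ Q) (hB : B ∈ Q.parts) {v : α} (hv : v ∈ B) :
    P.part v ∈ P.partsIn B := by
  have hvs : v ∈ s := Q.subset hB hv
  obtain ⟨C, hC, hpC⟩ := hPQ (P.part_mem.2 hvs)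
  rw [Q.eq_of_mem_parts hC hB (hpC (P.mem_part hvs)) hv] at hpC
  exact mem_partsIn.2 ⟨P.part_mem.2 hvs, hpC⟩

theorem biUnion_partsIn (hPQ : P ≤ Q) (hB : B ∈ Q.parts) : (P.partsIn B).biUnion id = B := by
  refine Subset.antisymm (biUnion_subset.2 fun p hp => (mem_partsIn.1 hp).2) fun v hv => ?_
  exact mem_biUnion.2 ⟨P.part v, part_mem_partsIn hPQ hB hv, P.mem_part (Q.subset hB hv)⟩

theorem sum_partsIn_sum {M : Type*} [AddCommMonoid M] (hPQ : P ≤ Q) (hB : B ∈ Q.parts)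
    (f : α → M) : ∑ p ∈ P.partsIn B, ∑ v ∈ p, f v = ∑ v ∈ B, f v := by
  conv_rhs => rw [← biUnion_partsIn hPQ hB]
  exact (sum_biUnion (P.disjoint.subset (coe_subset.2 (filter_subset _ _)))).symm

theorem sum_sum_partsIn {M : Type*} [AddCommMonoid M] (hPQ : P ≤ Q) (g : Finset α → M) :
    ∑ B ∈ Q.parts, ∑ p ∈ P.partsIn B, g p = ∑ p ∈ P.parts, g p := by
  have hdisj : (Q.parts : Set (Finset α)).PairwiseDisjoint P.partsIn := by
    intro B hB B' hB' hne
    refine disjoint_left.2 fun p hp hp' => hne ?_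
    obtain ⟨v, hv⟩ := P.nonempty_of_mem_parts (mem_partsIn.1 hp).1
    exact Q.eq_of_mem_parts hB hB' ((mem_partsIn.1 hp).2 hv) ((mem_partsIn.1 hp').2 hv)
  have hcover : Q.parts.biUnion P.partsIn = P.parts := by
    refine Subset.antisymm (biUnion_subset.2 fun B _ => filter_subset _ _) fun p hp => ?_
    obtain ⟨B, hB, hpB⟩ := hPQ hp
    exact mem_biUnion.2 ⟨B, hB, mem_partsIn.2 ⟨hp, hpB⟩⟩
  rw [← sum_biUnion hdisj, hcover]

theorem mem_parts_of_card_partsIn_le_one (hPQ : P ≤ Q) (hB : B ∈ Q.parts)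
    (hcard : #(P.partsIn B) ≤ 1) : B ∈ P.parts := by
  obtain ⟨v, hv⟩ := Q.nonempty_of_mem_parts hB
  have hvB := part_mem_partsIn hPQ hB hv
  suffices P.part v = B from this ▸ (mem_partsIn.1 hvB).1
  refine Subset.antisymm (mem_partsIn.1 hvB).2 fun w hw => ?_
  rw [← card_le_one.1 hcard _ (part_mem_partsIn hPQ hB hw) _ hvB]
  exact P.mem_part (Q.subset hB hw)

theorem exists_one_lt_card_partsIn (h : P < Q) : ∃ B ∈ Q.parts, 1 < #(P.partsIn B) := by
  by_contra! hcard
  exact h.not_ge fun B hB =>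
    ⟨B, mem_parts_of_card_partsIn_le_one h.le hB (hcard B hB), le_rfl⟩

theorem sum_parts_pow_sum_lt_of_lt {R : Type*} [CommSemiring R] [LinearOrder R]
    [IsStrictOrderedRing R] (h : P < Q) {f : α → R} (hf : ∀ v ∈ s, 0 < f v) {d : ℕ}
    (hd : 2 ≤ d) : ∑ p ∈ P.parts, (∑ v ∈ p, f v) ^ d < ∑ B ∈ Q.parts, (∑ v ∈ B, f v) ^ d := by
  have hpos : ∀ B, ∀ p ∈ P.partsIn B, 0 < ∑ v ∈ p, f v := fun _ p hp =>
    sum_pos (fun v hv => hf v (P.subset (mem_partsIn.1 hp).1 hv))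
      (P.nonempty_of_mem_parts (mem_partsIn.1 hp).1)
  obtain ⟨B₀, hB₀, hsplit⟩ := exists_one_lt_card_partsIn h
  rw [← sum_sum_partsIn h.le]
  refine sum_lt_sum (fun B hB => ?_) ⟨B₀, hB₀, ?_⟩
  · rw [← sum_partsIn_sum h.le hB]
    exact sum_pow_le_pow_sum (fun p hp => (hpos B p hp).le) (by omega)
  · rw [← sum_partsIn_sum h.le hB₀]
    exact sum_pow_lt_pow_sum (hpos B₀) hsplit hd

end Finpartition

theorem sum_card_filter_subset_eq_card_internalEdges {E : Finset (Finset V)}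
    (hE : ∀ e ∈ E, e.Nonempty) (P : Finpartition (Finset.univ : Finset V)) :
    ∑ A ∈ P.parts, #(E.filter (fun e => e ⊆ A)) = #(internalEdges E P) := by
  have hbiUnion : internalEdges E P = P.parts.biUnion (fun A => E.filter (fun e => e ⊆ A)) := by
    ext e
    simp only [internalEdges, mem_filter, mem_biUnion]
    exact ⟨fun ⟨he, A, hA, heA⟩ => ⟨A, hA, he, heA⟩, fun ⟨A, hA, he, heA⟩ => ⟨he, A, hA, heA⟩⟩
  rw [hbiUnion, card_biUnion]
  intro A hA A' hA' hne
  refine disjoint_left.2 fun e he he' => hne ?_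
  obtain ⟨v, hv⟩ := hE e (mem_filter.1 he).1
  exact P.eq_of_mem_parts hA hA' ((mem_filter.1 he).2 hv) ((mem_filter.1 he').2 hv)

theorem internalEdges_mono {E : Finset (Finset V)}
    {P Q : Finpartition (Finset.univ : Finset V)} (hPQ : P ≤ Q) :
    internalEdges E P ⊆ internalEdges E Q := by
  intro e he
  obtain ⟨he, p, hp, hep⟩ := mem_filter.1 he
  obtain ⟨B, hB, hpB⟩ := hPQ hp
  exact mem_filter.2 ⟨he, B, hB, hep.trans hpB⟩

theorem subset_internalEdges_compPartition {E E' : Finset (Finset V)} (hE' : E' ⊆ E)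
    (hne : ∀ e ∈ E', e.Nonempty) : E' ⊆ internalEdges E (compPartition E') := by
  intro e he
  obtain ⟨v, hv⟩ := hne e he
  refine mem_filter.2 ⟨hE' he, (compPartition E').part v, ?_, fun w hw => ?_⟩
  · exact (compPartition E').part_mem.2 (mem_univ v)
  · exact (Finpartition.mem_part_ofSetoid_iff_rel).2 (Relation.EqvGen.rel _ _ ⟨e, he, hv, hw⟩)

/-- **A strict refinement by internal-edge components strictly increases modularity.**
Let `H = (V,E)` be a hypergraph with at least one edge, all hyperedges of size at least 2,
and every vertex of positive degree (so all parts have positive volume).  For a partition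
`A` of `V`, let `H* = (V, E*)` where `E*` is the set of edges internal to parts of `A`.
If the component partition `p(H*)` is a strict refinement of `A`, then
`q_H(p(H*)) > q_H(A)`. -/
theorem strict_refinement_increases_modularity (E : Finset (Finset V)) (hne : E.Nonempty)
    (hsize : ∀ e ∈ E, 2 ≤ e.card) (hdpos : ∀ v : V, 0 < hdeg E v)
    (A : Finpartition (Finset.univ : Finset V))
    (hrefine : compPartition (internalEdges E A) ≤ A)
    (hstrict : compPartition (internalEdges E A) ≠ A) :
    hQ E A < hQ E (compPartition (internalEdges E A)) := by
  set P := compPartition (internalEdges E A)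
  have hEne : ∀ e ∈ E, e.Nonempty := fun e he => card_pos.1 (by linarith [hsize e he])
  have hint : internalEdges E P = internalEdges E A :=
    (internalEdges_mono hrefine).antisymm <| subset_internalEdges_compPartition
      (filter_subset _ _) fun e he => hEne e (mem_filter.1 he).1
  have hcov : ∑ B ∈ A.parts, (#(E.filter (fun e => e ⊆ B)) : ℝ)
      = ∑ p ∈ P.parts, (#(E.filter (fun e => e ⊆ p)) : ℝ) := by
    simp only [← Nat.cast_sum, sum_card_filter_subset_eq_card_internalEdges hEne, hint]
  have hdeg_pos : ∀ v, (0 : ℝ) < hdeg E v := fun v => by exact_mod_cast hdpos v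
  have htax : ∀ e ∈ E, ∑ p ∈ P.parts, (hvol E p / hvol E univ) ^ #e
      < ∑ B ∈ A.parts, (hvol E B / hvol E univ) ^ #e := fun e he => by
    simp only [hvol, sum_div]
    exact Finpartition.sum_parts_pow_sum_lt_of_lt (lt_of_le_of_ne hrefine hstrict)
      (fun v _ => div_pos (hdeg_pos v) (sum_pos (fun w _ => hdeg_pos w) ⟨v, mem_univ v⟩))
      (hsize e he)
  have hEcard : (0 : ℝ) < 1 / #E := by have := card_pos.2 hne; positivity
  rw [hQ, hQ, hcov]
  exact mul_lt_mul_of_pos_left (sub_lt_sub_left (sum_lt_sum_of_nonempty hne htax) _) hEcard
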